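/- arXiv:2307.16600 — 6 statements merged into one kernel-verified Lean document; each statement's English description precedes it below -/
import Mathlib

section
/- Let X and Y be topological spaces with Heyting bases L and M respectively (sublattices of the open-set lattices that are bases and are Heyting subalgebras of Opens(X) and Opens(Y)). Let f : X → Y be a function that is bases-continuous (f⁻¹[S] ∈ L for all S ∈ M) and bases-open (f[U] ∈ M for all U ∈ L). Then the inverse-image map f⁻¹ : M → L is a homomorphism of Heyting algebras, i.e., it additionally preserves the Heyting implication: f⁻¹[U → V] = f⁻¹[U] → f⁻¹[V] for all U, V ∈ M. -/
/-- A lattice basis for a topological space: a sublattice of the open-set lattice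
(containing `∅` and `univ`, closed under finite unions and intersections)
which is a basis for the topology. -/
structure LatticeBasis (X : Type*) [TopologicalSpace X] (L : Set (Set X)) : Prop where
  isOpen : ∀ U ∈ L, IsOpen U
  empty_mem : ∅ ∈ L
  univ_mem : Set.univ ∈ L
  union_mem : ∀ U ∈ L, ∀ V ∈ L, U ∪ V ∈ L
  inter_mem : ∀ U ∈ L, ∀ V ∈ L, U ∩ V ∈ L
  isBasis : TopologicalSpace.IsTopologicalBasis L

/-- A Heyting basis: a lattice basis additionally closed under the Heyting
implication `U → V = interior (Uᶜ ∪ V)` of the open-set Heyting algebra. -/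
structure HeytingBasis (X : Type*) [TopologicalSpace X] (L : Set (Set X))
    extends LatticeBasis X L : Prop where
  himp_mem : ∀ U ∈ L, ∀ V ∈ L, interior (Uᶜ ∪ V) ∈ L

theorem stmt4 {X Y : Type*} [TopologicalSpace X] [TopologicalSpace Y]
    {L : Set (Set X)} {M : Set (Set Y)} (hL : HeytingBasis X L) (hM : HeytingBasis Y M)
    (f : X → Y) (hcont : ∀ S ∈ M, f ⁻¹' S ∈ L) (hopen : ∀ U ∈ L, f '' U ∈ M) :
    ∀ U ∈ M, ∀ V ∈ M,
      f ⁻¹' (interior (Uᶜ ∪ V)) = interior ((f ⁻¹' U)ᶜ ∪ f ⁻¹' V) := by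
  intro U hU V hV
  apply Set.Subset.antisymm
  · -- preimage of interior is open and contained in the set
    have hmem : interior (Uᶜ ∪ V) ∈ M := hM.himp_mem U hU V hV
    have hop : IsOpen (f ⁻¹' (interior (Uᶜ ∪ V))) :=
      hL.isOpen _ (hcont _ hmem)
    apply hop.subset_interior_iff.mpr
    intro x hx
    have : f x ∈ Uᶜ ∪ V := interior_subset hx
    rcases this with h | h
    · exact Or.inl h
    · exact Or.inr h
  · intro x hx
    obtain ⟨B, hBL, hxB, hBsub⟩ :=
      hL.isBasis.exists_subset_of_mem_open hx isOpen_interior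
    have hBsub' : B ⊆ (f ⁻¹' U)ᶜ ∪ f ⁻¹' V := hBsub.trans interior_subset
    have himg : f '' B ⊆ Uᶜ ∪ V := by
      rintro y ⟨z, hzB, rfl⟩
      rcases hBsub' hzB with h | h
      · by_cases hy : f z ∈ U
        · exact absurd hy h
        · exact Or.inl hy
      · exact Or.inr h
    have : f '' B ⊆ interior (Uᶜ ∪ V) :=
      (hM.isOpen _ (hopen B hBL)).subset_interior_iff.mpr himg
    exact this ⟨x, hxB, rfl⟩
end

section
/- Let X be a topological space with Heyting basis L, and Y ⊆ X an open subset. Then M := { O ∩ Y : O ∈ L } is a Heyting basis for the subspace topology on Y; in particular M is closed under the Heyting implication of Opens(Y), and the map O ↦ O ∩ Y is a surjective homomorphism of Heyting algebras L → M. -/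
theorem stmt7 {X : Type*} [TopologicalSpace X] {L : Set (Set X)} (hL : HeytingBasis X L)
    (Y : Set X) (hY : IsOpen Y) :
    HeytingBasis Y {O : Set Y | ∃ U ∈ L, O = (Subtype.val : Y → X) ⁻¹' U} ∧
    -- the restriction map `O ↦ O ∩ Y` preserves the Heyting implication …
    (∀ U ∈ L, ∀ V ∈ L,
      (Subtype.val : Y → X) ⁻¹' (interior (Uᶜ ∪ V)) =
        interior (((Subtype.val : Y → X) ⁻¹' U)ᶜ ∪ (Subtype.val : Y → X) ⁻¹' V)) ∧
    -- … and is surjective onto the induced basis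
    (∀ O ∈ {O : Set Y | ∃ U ∈ L, O = (Subtype.val : Y → X) ⁻¹' U},
      ∃ U ∈ L, (Subtype.val : Y → X) ⁻¹' U = O) := by
  have key : ∀ S : Set X, (Subtype.val : Y → X) ⁻¹' (interior S) =
      interior ((Subtype.val : Y → X) ⁻¹' S) := fun S =>
    hY.isOpenEmbedding_subtypeVal.isOpenMap.preimage_interior_eq_interior_preimage
      continuous_subtype_val S
  have hset : {O : Set Y | ∃ U ∈ L, O = (Subtype.val : Y → X) ⁻¹' U}
      = (Set.preimage (Subtype.val : Y → X)) '' L := by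
    ext O; simp [eq_comm]
  have himp : ∀ U ∈ L, ∀ V ∈ L,
      (Subtype.val : Y → X) ⁻¹' (interior (Uᶜ ∪ V)) =
        interior (((Subtype.val : Y → X) ⁻¹' U)ᶜ ∪ (Subtype.val : Y → X) ⁻¹' V) := by
    intro U _ V _
    rw [key, Set.preimage_union, Set.preimage_compl]
  refine ⟨⟨⟨?_, ⟨∅, hL.empty_mem, by simp⟩, ⟨Set.univ, hL.univ_mem, by simp⟩, ?_, ?_, ?_⟩, ?_⟩,
    himp, ?_⟩
  · rintro O ⟨U, hU, rfl⟩
    exact (hL.isOpen U hU).preimage continuous_subtype_val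
  · rintro O ⟨U, hU, rfl⟩ O' ⟨V, hV, rfl⟩
    exact ⟨U ∪ V, hL.union_mem U hU V hV, by simp [Set.preimage_union]⟩
  · rintro O ⟨U, hU, rfl⟩ O' ⟨V, hV, rfl⟩
    exact ⟨U ∩ V, hL.inter_mem U hU V hV, by simp [Set.preimage_inter]⟩
  · rw [hset]
    exact hL.isBasis.isInducing hY.isOpenEmbedding_subtypeVal.isInducing
  · rintro O ⟨U, hU, rfl⟩ O' ⟨V, hV, rfl⟩
    exact ⟨interior (Uᶜ ∪ V), hL.himp_mem U hU V hV, (himp U hU V hV).symm⟩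
  · rintro O ⟨U, hU, rfl⟩
    exact ⟨U, hU, rfl⟩
end

section
/- Let Σ be a simplicial complex, F a poset, and f : Σ → F a p-morphism from the face poset of Σ to F (f(↑σ) = ↑f(σ) for all σ ∈ Σ). Define f̂ : |Σ| → F by f̂(x) = f(σˣ). Then f̂ is an open map: for every open W ⊆ |Σ|, the image f̂[W] is upward-closed in F. -/
/-! If `x ∈ W` lies in the relative interior of the face `σ x` and `t ⊇ σ x` is a larger face,
then `x ∈ conv t ⊆ closure (relint t)`, so the open set `W` meets `relint t` at some point `x'`,
and `σ x' = t` by uniqueness. Hence the faces met by `W` form an upper set of the face poset,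
and the p-morphism property of `f` carries this upper set to an upper set of `F`. -/

open Set Geometry

theorem Convex.subset_closure_intrinsicInterior {V : Type*} [NormedAddCommGroup V]
    [NormedSpace ℝ V] [FiniteDimensional ℝ V] {s : Set V} (hs : Convex ℝ s) :
    s ⊆ closure (intrinsicInterior ℝ s) := by
  intro x hx
  let x' : affineSpan ℝ s := ⟨x, subset_affineSpan ℝ s hx⟩
  have : Nonempty (affineSpan ℝ s) := ⟨x'⟩
  let e := (AffineIsometryEquiv.constVSub ℝ x').symm.toHomeomorph
  -- `t` is `s` seen in the direction of its affine span, where it has nonempty interior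
  let t := e ⁻¹' ((↑) ⁻¹' s)
  have hint : intrinsicInterior ℝ s = (↑) '' (e '' interior t) := by
    rw [e.image_interior, e.image_preimage]; rfl
  have ht : Convex ℝ t :=
    hs.affine_preimage ((affineSpan ℝ s).subtype.comp
      (AffineIsometryEquiv.constVSub ℝ x').symm.toAffineEquiv.toAffineMap)
  have ht' : (interior t).Nonempty := by
    simpa [hint] using Set.Nonempty.intrinsicInterior hs ⟨x, hx⟩
  have h0 : (0 : (affineSpan ℝ s).direction) ∈ closure (interior t) := by
    rw [ht.closure_interior_eq_closure_of_nonempty_interior ht']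
    exact subset_closure (by simpa [t, e, x'] using hx)
  have := mem_closure_image (continuous_subtype_val.comp e.continuous).continuousAt h0
  rw [image_comp] at this
  simpa [hint, e, x'] using this

theorem Geometry.SimplicialComplex.exists_mem_open_eq_face_of_subset
    {E : Type*} [NormedAddCommGroup E] [NormedSpace ℝ E] [FiniteDimensional ℝ E]
    {K : SimplicialComplex ℝ E} (σ : K.space → Finset E)
    (hσ : ∀ x : K.space, (x : E) ∈ intrinsicInterior ℝ (convexHull ℝ (σ x : Set E)))
    (hσuniq : ∀ x : K.space, ∀ s ∈ K.faces,
      (x : E) ∈ intrinsicInterior ℝ (convexHull ℝ (s : Set E)) → s = σ x)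
    {W : Set K.space} (hW : IsOpen W) {x : K.space} (hx : x ∈ W)
    {t : Finset E} (ht : t ∈ K.faces) (hxt : σ x ⊆ t) :
    ∃ x' ∈ W, σ x' = t := by
  have hx_conv : (x : E) ∈ convexHull ℝ (t : Set E) :=
    convexHull_mono (by exact_mod_cast hxt) (intrinsicInterior_subset (hσ x))
  have hx_cl := (convex_convexHull ℝ _).subset_closure_intrinsicInterior hx_conv
  obtain ⟨U, hU, rfl⟩ := isOpen_induced_iff.1 hW
  obtain ⟨y, hyU, hy⟩ := mem_closure_iff.1 hx_cl U hU hx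
  let x' : K.space := ⟨y, K.convexHull_subset_space ht (intrinsicInterior_subset hy)⟩
  exact ⟨x', hyU, (hσuniq x' t ht hy).symm⟩

theorem stmt11 {n : ℕ} (K : SimplicialComplex ℝ (EuclideanSpace ℝ (Fin n)))
    {F : Type*} [PartialOrder F]
    (f : Finset (EuclideanSpace ℝ (Fin n)) → F)
    -- `f` is a p-morphism from the face poset of `K` to `F`: `f(↑s) = ↑f(s)`
    (hp : ∀ s ∈ K.faces,
      {y : F | ∃ t ∈ K.faces, s ⊆ t ∧ f t = y} = {y : F | f s ≤ y})
    -- `σ x` is the unique face of `K` whose relative interior contains `x`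
    (σ : K.space → Finset (EuclideanSpace ℝ (Fin n)))
    (hσ : ∀ x : K.space, σ x ∈ K.faces ∧
      (x : EuclideanSpace ℝ (Fin n)) ∈ intrinsicInterior ℝ (convexHull ℝ (σ x : Set (EuclideanSpace ℝ (Fin n)))))
    (hσuniq : ∀ x : K.space, ∀ s ∈ K.faces,
      (x : EuclideanSpace ℝ (Fin n)) ∈ intrinsicInterior ℝ (convexHull ℝ (s : Set (EuclideanSpace ℝ (Fin n)))) →
      s = σ x)
    (W : Set K.space) (hW : IsOpen W) :
    IsUpperSet {y : F | ∃ x ∈ W, f (σ x) = y} := by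
  rintro - b hab ⟨x, hxW, rfl⟩
  obtain ⟨t, ht, hxt, rfl⟩ : b ∈ {y : F | ∃ t ∈ K.faces, σ x ⊆ t ∧ f t = y} := by
    rwa [hp _ (hσ x).1]
  obtain ⟨x', hx'W, hx't⟩ := K.exists_mem_open_eq_face_of_subset σ (fun x => (hσ x).2) hσuniq
    hW hxW ht hxt
  exact ⟨x', hx'W, congrArg f hx't⟩
end

section
/- Let f be a surjective open continuous map from a topological space P onto a finite poset F equipped with the Alexandrov topology, and suppose x < y in F. Then the fiber f⁻¹[{x}] is contained in the topological boundary of the fiber f⁻¹[{y}], i.e., f⁻¹[{x}] ⊆ Cl(f⁻¹[{y}]) \ Int(f⁻¹[{y}]). -/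
/-- The Alexandrov (upper) topology on a preorder: opens are the upward-closed sets. -/
def alexTop (F : Type*) [Preorder F] : TopologicalSpace F where
  IsOpen U := ∀ ⦃x⦄, x ∈ U → ∀ ⦃y⦄, x ≤ y → y ∈ U
  isOpen_univ := fun _ _ _ _ => trivial
  isOpen_inter := fun _ _ hU hV _ hx _ hxy => ⟨hU hx.1 hxy, hV hx.2 hxy⟩
  isOpen_sUnion := fun S hS x hx y hxy => by
    obtain ⟨U, hU, hxU⟩ := hx
    exact ⟨U, hU, hS U hU hxU hxy⟩

theorem stmt12 {P F : Type*} [TopologicalSpace P] [Finite F] [PartialOrder F]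
    (f : P → F) (hsurj : Function.Surjective f)
    (hcont : @Continuous P F _ (alexTop F) f)
    (hopen : @IsOpenMap P F _ (alexTop F) f)
    {x y : F} (hxy : x < y) :
    f ⁻¹' {x} ⊆ closure (f ⁻¹' {y}) \ interior (f ⁻¹' {y}) := by
  intro p hp
  have hfp : f p = x := hp
  constructor
  · rw [mem_closure_iff]
    intro U hU hpU
    have hfU : (alexTop F).IsOpen (f '' U) := hopen U hU
    have hyU : y ∈ f '' U := hfU ⟨p, hpU, hfp⟩ hxy.le
    obtain ⟨q, hqU, hqy⟩ := hyU
    exact ⟨q, hqU, hqy⟩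
  · intro h
    have hpy : p ∈ f ⁻¹' {y} := interior_subset h
    exact hxy.ne (hfp.symm.trans hpy)
end

section
/- Let T be a finite rooted tree (a rooted poset in which the down-set of every element is a chain) in which every maximal element has the same height n, equipped with a plane ordering ≺ on its maximal elements, meaning a linear order such that for every x ∈ T the set of maximal elements above x is an interval for ≺. Then there exists an injective map d : T → ℝ² such that (i) the second coordinate of d(x) equals the height of x for all x, (ii) the restriction of the first coordinate to the maximal elements is strictly monotone with respect to ≺, and (iii) whenever y₁ is an immediate successor of x₁ and y₂ an immediate successor of x₂ with {x₁,y₁} ≠ {x₂,y₂}, the closed straight-line segments from d(x₁) to d(y₁) and from d(x₂) to d(y₂) intersect at most in common endpoints. -/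
theorem stmt17 {T : Type*} [Finite T] [PartialOrder T] (n : ℕ)
    -- T is a rooted tree: there is a root and every down-set is a chain
    (r : T) (hr : ∀ z : T, r ≤ z)
    (htree : ∀ z : T, IsChain (· ≤ ·) {w : T | w ≤ z})
    -- every maximal element has height n
    (htop : ∀ z : T, IsMax z → Order.height z = (n : ℕ∞))
    -- ≺ is a plane ordering: a strict linear order on the maximal elements …
    (prec : T → T → Prop)
    (hirr : ∀ z, ¬ prec z z)
    (htrans : ∀ z₁ z₂ z₃, prec z₁ z₂ → prec z₂ z₃ → prec z₁ z₃)
    (htrich : ∀ z₁ z₂, IsMax z₁ → IsMax z₂ → z₁ ≠ z₂ → prec z₁ z₂ ∨ prec z₂ z₁)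
    -- … such that the maximal elements above any x form a ≺-interval
    (hinterval : ∀ x t₁ t₂ t₃ : T, IsMax t₁ → IsMax t₂ → IsMax t₃ →
      prec t₁ t₂ → prec t₂ t₃ → x ≤ t₁ → x ≤ t₃ → x ≤ t₂) :
    ∃ d : T → ℝ × ℝ, Function.Injective d ∧
      -- (i) the second coordinate is the height
      (∀ z : T, (d z).2 = ((Order.height z).toNat : ℝ)) ∧
      -- (ii) the first coordinate is strictly monotone on maximal elements w.r.t. ≺
      (∀ z₁ z₂ : T, IsMax z₁ → IsMax z₂ → prec z₁ z₂ → (d z₁).1 < (d z₂).1) ∧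
      -- (iii) distinct edges meet at most in common endpoints
      (∀ x₁ y₁ x₂ y₂ : T, x₁ ⋖ y₁ → x₂ ⋖ y₂ → (x₁, y₁) ≠ (x₂, y₂) →
        segment ℝ (d x₁) (d y₁) ∩ segment ℝ (d x₂) (d y₂) ⊆
          ({d x₁, d y₁} : Set (ℝ × ℝ)) ∩ ({d x₂, d y₂} : Set (ℝ × ℝ))) := by
  classical
  have _inst := Fintype.ofFinite T
  -- every element lies below a maximal element
  have hmaxex : ∀ z : T, ∃ t, z ≤ t ∧ IsMax t := by
    intro z
    obtain ⟨b, hb, hm⟩ := Finite.exists_le_maximal (a := z) (p := fun _ : T => True) trivial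
    exact ⟨b, hb, fun c hc => hm.2 trivial hc⟩
  -- comparability of elements below a common element
  have hcomp : ∀ a b c : T, a ≤ c → b ≤ c → a ≤ b ∨ b ≤ a := by
    intro a b c ha hb
    rcases eq_or_ne a b with rfl | hne
    · exact Or.inl le_rfl
    · exact htree c ha hb hne
  -- heights are finite
  have hfin : ∀ z : T, Order.height z ≠ ⊤ := by
    intro z
    obtain ⟨t, hzt, hmt⟩ := hmaxex z
    have hle := (Order.height_mono hzt).trans_eq (htop t hmt)
    intro h
    rw [h] at hle
    exact (top_le_iff.mp hle ▸ (ENat.coe_ne_top n)) rfl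
  set H : T → ℕ := fun z => (Order.height z).toNat with hHdef
  have hcoe : ∀ z : T, Order.height z = (H z : ℕ∞) := fun z => (ENat.coe_toNat (hfin z)).symm
  have hlt : ∀ {x y : T}, x < y → H x < H y := by
    intro x y hxy
    have := Order.height_strictMono hxy (lt_top_iff_ne_top.mpr (hfin x))
    rw [hcoe x, hcoe y] at this
    exact_mod_cast this
  -- covers go up exactly one level
  have hcov : ∀ {x y : T}, x ⋖ y → H y = H x + 1 := by
    intro x y hxy
    have h1 : Order.height y ≤ ((H x + 1 : ℕ) : ℕ∞) := by
      rw [Order.height_le_coe_iff]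
      intro w hw
      have hwx : w ≤ x := by
        rcases hcomp w x y hw.le hxy.1.le with h | h
        · exact h
        · rcases eq_or_lt_of_le h with rfl | h'
          · exact le_rfl
          · exact absurd hw (hxy.2 h')
      calc Order.height w ≤ Order.height x := Order.height_mono hwx
        _ < ((H x + 1 : ℕ) : ℕ∞) := by
            rw [hcoe x]; exact_mod_cast Nat.lt_succ_self _
    have h1' : H y ≤ H x + 1 := by rw [hcoe y] at h1; exact_mod_cast h1
    have h2 : H x < H y := hlt hxy.1
    omega
  -- the rank of a maximal element in the ≺-order
  set rk : T → ℕ := fun t => (Finset.univ.filter (fun s => IsMax s ∧ prec s t)).card with hrkdef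
  have hrk : ∀ t₁ t₂ : T, IsMax t₁ → IsMax t₂ → prec t₁ t₂ → rk t₁ < rk t₂ := by
    intro t₁ t₂ h₁ h₂ hp
    apply Finset.card_lt_card
    constructor
    · intro s hs
      simp only [Finset.mem_filter, Finset.mem_univ, true_and] at hs ⊢
      exact ⟨hs.1, htrans _ _ _ hs.2 hp⟩
    · intro hsub
      have ht : t₁ ∈ Finset.univ.filter (fun s => IsMax s ∧ prec s t₂) := by
        simp [h₁, hp]
      have := hsub ht
      simp only [Finset.mem_filter, Finset.mem_univ, true_and] at this
      exact hirr t₁ this.2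
  -- set of maximal elements above z, and minimal rank
  set M : T → Set T := fun z => {t | IsMax t ∧ z ≤ t} with hMdef
  set f : T → ℕ := fun z => sInf (rk '' M z) with hfdef
  have hfwit : ∀ z : T, ∃ t, t ∈ M z ∧ rk t = f z := by
    intro z
    obtain ⟨t, hzt, hmt⟩ := hmaxex z
    have hne : (rk '' M z).Nonempty := ⟨rk t, t, ⟨hmt, hzt⟩, rfl⟩
    obtain ⟨t', ht', h⟩ := Nat.sInf_mem hne
    exact ⟨t', ht', h⟩
  have hdisj : ∀ z₁ z₂ : T, ¬ z₁ ≤ z₂ → ¬ z₂ ≤ z₁ → ∀ t, t ∈ M z₁ → t ∉ M z₂ := by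
    intro z₁ z₂ h12 h21 t ht1 ht2
    rcases hcomp z₁ z₂ t ht1.2 ht2.2 with h | h
    exacts [h12 h, h21 h]
  -- separation: the maximal elements above incomparable elements form separated intervals
  have key : ∀ z₁ z₂ : T, ¬ z₁ ≤ z₂ → ¬ z₂ ≤ z₁ → ∀ a b, a ∈ M z₁ → b ∈ M z₂ → prec a b →
      ∀ t₁ ∈ M z₁, ∀ t₂ ∈ M z₂, prec t₁ t₂ := by
    intro z₁ z₂ h12 h21 a b ha hb hab t₁ ht₁ t₂ ht₂
    have hne : t₁ ≠ t₂ := fun h => hdisj _ _ h12 h21 t₁ ht₁ (h ▸ ht₂)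
    rcases htrich t₁ t₂ ht₁.1 ht₂.1 hne with h | h
    · exact h
    · exfalso
      have hne2 : a ≠ t₂ := fun h => hdisj _ _ h12 h21 a ha (h ▸ ht₂)
      rcases htrich a t₂ ha.1 ht₂.1 hne2 with h2 | h2
      · exact hdisj _ _ h12 h21 t₂
          ⟨ht₂.1, hinterval z₁ a t₂ t₁ ha.1 ht₂.1 ht₁.1 h2 h ha.2 ht₁.2⟩ ht₂
      · exact hdisj _ _ h21 h12 a
          ⟨ha.1, hinterval z₂ t₂ a b ht₂.1 ha.1 hb.1 h2 hab ht₂.2 hb.2⟩ ha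
  have hsep : ∀ z₁ z₂ : T, ¬ z₁ ≤ z₂ → ¬ z₂ ≤ z₁ →
      (∀ t₁ ∈ M z₁, ∀ t₂ ∈ M z₂, prec t₁ t₂) ∨ (∀ t₁ ∈ M z₁, ∀ t₂ ∈ M z₂, prec t₂ t₁) := by
    intro z₁ z₂ h12 h21
    obtain ⟨a, ha, -⟩ := hfwit z₁
    obtain ⟨b, hb, -⟩ := hfwit z₂
    have hne : a ≠ b := fun h => hdisj z₁ z₂ h12 h21 a ha (h ▸ hb)
    rcases htrich a b ha.1 hb.1 hne with h | h
    · exact Or.inl (key z₁ z₂ h12 h21 a b ha hb h)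
    · exact Or.inr fun t₁ ht₁ t₂ ht₂ => key z₂ z₁ h21 h12 b a hb ha h t₂ ht₂ t₁ ht₁
  have hflt : ∀ z₁ z₂ u v : T, ¬ z₁ ≤ z₂ → ¬ z₂ ≤ z₁ →
      (∀ t₁ ∈ M z₁, ∀ t₂ ∈ M z₂, prec t₁ t₂) → z₁ ≤ u → z₂ ≤ v → f u < f v := by
    intro z₁ z₂ u v h12 h21 hs hu hv
    obtain ⟨a, ha, hfa⟩ := hfwit u
    obtain ⟨b, hb, hfb⟩ := hfwit v
    rw [← hfa, ← hfb]
    exact hrk a b ha.1 hb.1 (hs a ⟨ha.1, hu.trans ha.2⟩ b ⟨hb.1, hv.trans hb.2⟩)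
  have hincomp : ∀ z₁ z₂ : T, z₁ ≠ z₂ → H z₁ = H z₂ → ¬ z₁ ≤ z₂ ∧ ¬ z₂ ≤ z₁ := by
    intro z₁ z₂ hne hH
    constructor <;> intro h
    · exact absurd hH (hlt (lt_of_le_of_ne h hne)).ne
    · exact absurd hH.symm (hlt (lt_of_le_of_ne h (Ne.symm hne))).ne
  have hfne : ∀ z₁ z₂ : T, z₁ ≠ z₂ → H z₁ = H z₂ → f z₁ ≠ f z₂ := by
    intro z₁ z₂ hne hH
    obtain ⟨h12, h21⟩ := hincomp z₁ z₂ hne hH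
    rcases hsep z₁ z₂ h12 h21 with hs | hs
    · exact (hflt z₁ z₂ z₁ z₂ h12 h21 hs le_rfl le_rfl).ne
    · exact (hflt z₂ z₁ z₂ z₁ h21 h12 (fun a ha b hb => hs b hb a ha) le_rfl le_rfl).ne'
  have hfmax : ∀ z : T, IsMax z → f z = rk z := by
    intro z hz
    obtain ⟨t, ht, hft⟩ := hfwit z
    have : t = z := le_antisymm (hz ht.2) ht.2
    rw [← hft, this]
  -- the drawing
  set d : T → ℝ × ℝ := fun z => ((f z : ℝ), (H z : ℝ)) with hddef
  have hd1 : ∀ z : T, (d z).1 = (f z : ℝ) := fun z => rfl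
  have hd2 : ∀ z : T, (d z).2 = (H z : ℝ) := fun z => rfl
  -- injectivity
  have hinj : Function.Injective d := by
    intro z₁ z₂ h
    by_contra hne
    simp only [hddef, Prod.mk.injEq, Nat.cast_inj] at h
    exact hfne z₁ z₂ hne h.2 h.1
  -- parametrization of edge segments
  have hseg : ∀ (p : ℝ × ℝ) (a b h : ℝ), p ∈ segment ℝ (a, h) (b, h + 1) →
      ∃ t : ℝ, 0 ≤ t ∧ t ≤ 1 ∧ p = ((1 - t) * a + t * b, h + t) := by
    intro p a b h hp
    rw [segment_eq_image'] at hp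
    obtain ⟨t, ht, rfl⟩ := hp
    refine ⟨t, ht.1, ht.2, ?_⟩
    simp only [Prod.ext_iff, Prod.smul_fst, Prod.smul_snd, Prod.fst_add, Prod.snd_add,
      Prod.fst_sub, Prod.snd_sub, smul_eq_mul]
    constructor <;> ring
  have hdy : ∀ x y : T, x ⋖ y → d y = ((f y : ℝ), (H x : ℝ) + 1) := by
    intro x y hxy
    have : (H y : ℝ) = (H x : ℝ) + 1 := by rw [hcov hxy]; push_cast; ring
    simp only [hddef, this]
  have hparam : ∀ x y : T, x ⋖ y → ∀ p ∈ segment ℝ (d x) (d y),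
      ∃ t : ℝ, 0 ≤ t ∧ t ≤ 1 ∧ p = ((1 - t) * (f x : ℝ) + t * (f y : ℝ), (H x : ℝ) + t) := by
    intro x y hxy p hp
    rw [hdy x y hxy] at hp
    exact hseg p _ _ _ hp
  -- arithmetic no-crossing lemma
  have harith : ∀ a b c e t : ℝ, 0 ≤ t → t ≤ 1 →
      (1 - t) * a + t * b = (1 - t) * c + t * e → a < c → b < e → False := by
    intro a b c e t ht0 ht1 heq hac hbe
    rcases lt_or_ge t 1 with h1 | h1
    · have h2 : (1 - t) * a < (1 - t) * c := by nlinarith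
      have h3 : t * b ≤ t * e := by nlinarith
      linarith
    · have ht : t = 1 := le_antisymm ht1 h1
      rw [ht] at heq; simp at heq; linarith
  refine ⟨d, hinj, fun z => rfl, ?_, ?_⟩
  · -- (ii)
    intro z₁ z₂ h₁ h₂ hp
    simp only [hd1]
    exact_mod_cast (hfmax z₁ h₁ ▸ hfmax z₂ h₂ ▸ hrk z₁ z₂ h₁ h₂ hp)
  -- (iii)
  have main : ∀ x₁ y₁ x₂ y₂ : T, x₁ ⋖ y₁ → x₂ ⋖ y₂ → (x₁, y₁) ≠ (x₂, y₂) → H x₁ ≤ H x₂ →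
      segment ℝ (d x₁) (d y₁) ∩ segment ℝ (d x₂) (d y₂) ⊆
        ({d x₁, d y₁} : Set (ℝ × ℝ)) ∩ ({d x₂, d y₂} : Set (ℝ × ℝ)) := by
    intro x₁ y₁ x₂ y₂ h1 h2 hne hle p hp
    obtain ⟨t, ht0, ht1, hpt⟩ := hparam x₁ y₁ h1 p hp.1
    obtain ⟨s, hs0, hs1, hps⟩ := hparam x₂ y₂ h2 p hp.2
    have heq : ((1 - t) * (f x₁ : ℝ) + t * (f y₁ : ℝ), (H x₁ : ℝ) + t)
        = ((1 - s) * (f x₂ : ℝ) + s * (f y₂ : ℝ), (H x₂ : ℝ) + s) := by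
      rw [← hpt, ← hps]
    rw [Prod.mk.injEq] at heq
    obtain ⟨heq1, heq2⟩ := heq
    rcases eq_or_lt_of_le hle with hHeq | hHlt
    · -- same level
      have hts : t = s := by
        have : (H x₁ : ℝ) = (H x₂ : ℝ) := by exact_mod_cast hHeq
        linarith
      subst hts
      rcases eq_or_ne x₁ x₂ with rfl | hxne
      · -- same lower endpoint, different upper endpoints
        have hyne : y₁ ≠ y₂ := by
          intro h; exact hne (by rw [h])
        have hfy : (f y₁ : ℝ) ≠ (f y₂ : ℝ) := by
          have : f y₁ ≠ f y₂ := hfne y₁ y₂ hyne (by rw [hcov h1, hcov h2])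
          exact_mod_cast this
        have ht00 : t = 0 := by
          rcases eq_or_ne t 0 with h | h
          · exact h
          · exfalso
            apply hfy
            have := heq1
            field_simp at this
            rcases mul_eq_zero.mp (by linarith [this] : t * ((f y₁ : ℝ) - (f y₂ : ℝ)) = 0) with h' | h'
            · exact absurd h' h
            · linarith
        subst ht00
        have hpx : p = d x₁ := by
          rw [hpt]; simp [hddef]
        exact ⟨Or.inl hpx, Or.inl hpx⟩
      · -- different lower endpoints at same level: segments are disjoint
        exfalso
        obtain ⟨h12, h21⟩ := hincomp x₁ x₂ hxne hHeq
        have hHx : (H x₁ : ℝ) = (H x₂ : ℝ) := by exact_mod_cast hHeq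
        rcases hsep x₁ x₂ h12 h21 with hs' | hs'
        · have ha : f x₁ < f x₂ := hflt x₁ x₂ x₁ x₂ h12 h21 hs' le_rfl le_rfl
          have hb : f y₁ < f y₂ := hflt x₁ x₂ y₁ y₂ h12 h21 hs' h1.1.le h2.1.le
          exact harith _ _ _ _ t ht0 ht1 heq1 (by exact_mod_cast ha) (by exact_mod_cast hb)
        · have ha : f x₂ < f x₁ := hflt x₂ x₁ x₂ x₁ h21 h12 (fun a ha b hb => hs' b hb a ha) le_rfl le_rfl
          have hb : f y₂ < f y₁ := hflt x₂ x₁ y₂ y₁ h21 h12 (fun a ha b hb => hs' b hb a ha) h2.1.le h1.1.le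
          exact harith _ _ _ _ t ht0 ht1 heq1.symm (by exact_mod_cast ha) (by exact_mod_cast hb)
    · -- x₂ strictly higher
      have hHle : (H x₁ : ℝ) + 1 ≤ (H x₂ : ℝ) := by exact_mod_cast hHlt
      have ht1' : t = 1 := by linarith
      have hs0' : s = 0 := by linarith
      subst ht1'; subst hs0'
      have hpy : p = d y₁ := by
        rw [hpt, hdy x₁ y₁ h1]; norm_num
      have hpx : p = d x₂ := by
        rw [hps]; simp [hddef]
      exact ⟨Or.inr hpy, Or.inl hpx⟩
  intro x₁ y₁ x₂ y₂ h1 h2 hne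
  rcases le_total (H x₁) (H x₂) with h | h
  · exact main x₁ y₁ x₂ y₂ h1 h2 hne h
  · intro p hp
    have := main x₂ y₂ x₁ y₁ h2 h1 (Ne.symm hne) h ⟨hp.2, hp.1⟩
    exact ⟨this.2, this.1⟩
end

section
/- Let T be a finite poset, let d₁ : T → ℝ and let α : T → ℝ^{n+1} be defined by α(x) = e_{height(x)} + d₁(x)·e_n, where e₀,…,e_n are the standard basis vectors, height(x) ≤ n for all x, and assume d₁ is injective on each set of elements of equal height. Then for every chain X ⊆ T, the points α[X] are affinely independent, so Conv(α[X]) is a simplex of dimension |X| − 1. -/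
theorem stmt18 {T : Type*} [Finite T] [PartialOrder T] (n : ℕ)
    (hgt : T → ℕ) (hhgt : ∀ z : T, (hgt z : ℕ∞) = Order.height z)
    (hle : ∀ z : T, hgt z ≤ n)
    (d₁ : T → ℝ)
    -- d₁ is injective on each set of elements of equal height
    (hinj : ∀ z w : T, hgt z = hgt w → d₁ z = d₁ w → z = w)
    -- α(z) = e_{height z} + d₁(z) · e_n in ℝ^{n+1}
    (α : T → Fin (n + 1) → ℝ)
    (hα : ∀ z : T, α z = fun i : Fin (n + 1) =>
      (if (i : ℕ) = hgt z then (1 : ℝ) else 0) + (if (i : ℕ) = n then d₁ z else 0))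
    (X : Set T) (hX : IsChain (· ≤ ·) X) :
    AffineIndependent ℝ (fun z : X => α z) := by
  -- heights are injective on the chain
  have hgtinj : ∀ z w : X, hgt (z : T) = hgt (w : T) → z = w := by
    intro z w h
    by_contra hne
    have hne' : (z : T) ≠ (w : T) := fun hh => hne (Subtype.ext hh)
    have hfin : ∀ t : T, Order.height t < ⊤ := by
      intro t
      rw [← hhgt t]
      exact lt_of_le_of_lt (show (hgt t : ℕ∞) ≤ (n : ℕ∞) by exact_mod_cast hle t)
        (by simp [lt_top_iff_ne_top])
    rcases hX z.2 w.2 hne' with hlt | hlt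
    · have : Order.height (z : T) < Order.height (w : T) :=
        Order.height_strictMono (lt_of_le_of_ne hlt hne') (hfin _)
      rw [← hhgt, ← hhgt, h] at this
      exact lt_irrefl _ this
    · have : Order.height (w : T) < Order.height (z : T) :=
        Order.height_strictMono (lt_of_le_of_ne hlt (Ne.symm hne')) (hfin _)
      rw [← hhgt, ← hhgt, h] at this
      exact lt_irrefl _ this
  rw [affineIndependent_iff]
  intro s w hw0 hsum
  -- first: weights of elements of height < n vanish
  have key : ∀ z ∈ s, hgt (z : T) < n → w z = 0 := by
    intro z hz hzn
    have := congrFun hsum ⟨hgt (z : T), lt_of_lt_of_le hzn (Nat.le_succ _ |>.trans (by omega))⟩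
    simp only [Finset.sum_apply, Pi.smul_apply, Pi.zero_apply] at this
    rw [Finset.sum_eq_single z] at this
    · rw [hα] at this
      simp only [smul_eq_mul] at this
      simp only [show (hgt (z : T) = hgt (z : T)) = True from by simp,
        show (hgt (z : T) = n) = False from by simp [Nat.ne_of_lt hzn]] at this
      simpa using this
    · intro b hb hbz
      rw [hα]
      simp only [smul_eq_mul]
      rw [if_neg, if_neg (by omega)]
      · ring
      · intro hh
        exact hbz (hgtinj b z hh.symm)
    · intro h; exact absurd hz h
  -- any element of height n gets weight 0 via the sum of weights
  intro z hz
  rcases lt_or_eq_of_le (hle (z : T)) with h | h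
  · exact key z hz h
  · have : ∑ e ∈ s, w e = w z := by
      rw [Finset.sum_eq_single z]
      · intro b hb hbz
        rcases lt_or_eq_of_le (hle (b : T)) with hb' | hb'
        · exact key b hb hb'
        · exact absurd (hgtinj b z (hb'.trans h.symm)) hbz
      · intro h; exact absurd hz h
    rw [hw0] at this
    exact this.symm
end
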